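/- arXiv:2208.12607 — 3 statements merged into one kernel-verified Lean document; each statement's English description precedes it below -/
import Mathlib

section
/- Let H be a Hopf algebra with invertible antipode, M a left-left Yetter-Drinfeld H-module and N a left-left anti-Yetter-Drinfeld H-module. Then M ⊗ N with the diagonal action h(m⊗n) = h⁽¹⁾m ⊗ h⁽²⁾n and the codiagonal coaction (m⊗n) ↦ m⁽⁻¹⁾n⁽⁻¹⁾ ⊗ m⁽⁰⁾ ⊗ n⁽⁰⁾ is an anti-Yetter-Drinfeld module. -/
set_option synthInstance.maxHeartbeats 1000000
set_option maxHeartbeats 1000000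


open TensorProduct

section

variable (k : Type*) {H M : Type*} [Field k] [Ring H] [HopfAlgebra k H]
  [AddCommGroup M] [Module k M]

/-- The (anti-)Yetter-Drinfeld compatibility condition for a left `H`-module `M`
(action `α : H ⊗ M → M`) and left `H`-comodule `M` (coaction `co : M → H ⊗ M`), with
respect to a "twisting" endomorphism `S'` of `H` (`S' = S` gives the Yetter-Drinfeld
condition `ρ(hm) = h⁽¹⁾m⁽⁻¹⁾S(h⁽³⁾) ⊗ h⁽²⁾m⁽⁰⁾`, `S' = S⁻¹` the anti-Yetter-Drinfeld
condition), phrased via Sweedler representations: for all representations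
`(Δ⊗id)Δ(h) = Σᵢ h₁ᵢ ⊗ h₂ᵢ ⊗ h₃ᵢ` and `co(m) = Σⱼ wⱼ ⊗ zⱼ`. -/
def YDCondition (S' : H →ₗ[k] H) (α : H ⊗[k] M →ₗ[k] M) (co : M →ₗ[k] H ⊗[k] M) : Prop :=
  ∀ (h : H) (m : M) (n p : ℕ) (h₁ h₂ h₃ : Fin n → H) (w : Fin p → H) (z : Fin p → M),
    (TensorProduct.map (Coalgebra.comul (R := k)) (LinearMap.id (M := H)))
        (Coalgebra.comul (R := k) h) = ∑ i, (h₁ i ⊗ₜ[k] h₂ i) ⊗ₜ[k] h₃ i →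
    co m = ∑ j, w j ⊗ₜ[k] z j →
    co (α (h ⊗ₜ[k] m)) = ∑ i, ∑ j, (h₁ i * w j * S' (h₃ i)) ⊗ₜ[k] α (h₂ i ⊗ₜ[k] z j)

end

section

variable (k : Type*) {H M N : Type*} [Field k] [Ring H] [HopfAlgebra k H]
  [AddCommGroup M] [Module k M] [AddCommGroup N] [Module k N]

/-- The diagonal action `h (m ⊗ n) = h⁽¹⁾m ⊗ h⁽²⁾n` on `M ⊗ N`. -/
noncomputable def diagonalAction (αM : H ⊗[k] M →ₗ[k] M) (αN : H ⊗[k] N →ₗ[k] N) :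
    H ⊗[k] (M ⊗[k] N) →ₗ[k] M ⊗[k] N :=
  TensorProduct.map αM αN ∘ₗ (TensorProduct.tensorTensorTensorComm k H H M N).toLinearMap ∘ₗ
    TensorProduct.map (Coalgebra.comul (R := k)) LinearMap.id

/-- The codiagonal coaction `(m ⊗ n) ↦ m⁽⁻¹⁾n⁽⁻¹⁾ ⊗ m⁽⁰⁾ ⊗ n⁽⁰⁾` on `M ⊗ N`. -/
noncomputable def codiagonalCoaction (coM : M →ₗ[k] H ⊗[k] M) (coN : N →ₗ[k] H ⊗[k] N) :
    M ⊗[k] N →ₗ[k] H ⊗[k] (M ⊗[k] N) :=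
  TensorProduct.map (LinearMap.mul' k H) LinearMap.id ∘ₗ
    (TensorProduct.tensorTensorTensorComm k H M H N).toLinearMap ∘ₗ TensorProduct.map coM coN

end

/-! ### Auxiliary material -/

section Aux

theorem AYD.exfin {k A B : Type*} [Field k] [AddCommGroup A] [Module k A]
    [AddCommGroup B] [Module k B] (x : A ⊗[k] B) :
    ∃ (n : ℕ) (a : Fin n → A) (b : Fin n → B), x = ∑ i, a i ⊗ₜ[k] b i := by
  obtain ⟨S, hS⟩ := TensorProduct.exists_finset x
  refine ⟨S.card, fun i => (S.equivFin.symm i).1.1, fun i => (S.equivFin.symm i).1.2, ?_⟩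
  rw [hS, ← Finset.sum_coe_sort S (fun p => p.1 ⊗ₜ[k] p.2),
    ← Equiv.sum_comp S.equivFin.symm (fun p => (p : A × B).1 ⊗ₜ[k] (p : A × B).2)]

theorem AYD.repr3 {k A B C : Type*} [Field k] [AddCommGroup A] [Module k A]
    [AddCommGroup B] [Module k B] [AddCommGroup C] [Module k C] (t : (A ⊗[k] B) ⊗[k] C) :
    ∃ (n : ℕ) (a : Fin n → A) (b : Fin n → B) (c : Fin n → C),
      t = ∑ i, (a i ⊗ₜ[k] b i) ⊗ₜ[k] c i := by
  induction t using TensorProduct.induction_on with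
  | zero => exact ⟨0, ![], ![], ![], by simp⟩
  | tmul x c₀ =>
    obtain ⟨n, a, b, hx⟩ := AYD.exfin x
    exact ⟨n, a, b, fun _ => c₀, by rw [hx, TensorProduct.sum_tmul]⟩
  | add t₁ t₂ h₁ h₂ =>
    obtain ⟨n₁, a₁, b₁, c₁, e₁⟩ := h₁
    obtain ⟨n₂, a₂, b₂, c₂, e₂⟩ := h₂
    refine ⟨n₁ + n₂, Fin.append a₁ a₂, Fin.append b₁ b₂, Fin.append c₁ c₂, ?_⟩
    rw [Fin.sum_univ_add, e₁, e₂]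
    simp [Fin.append]

section NatHelpers
variable {k : Type*} [CommRing k] {X Y Z X' Y' : Type*}
  [AddCommGroup X] [Module k X] [AddCommGroup Y] [Module k Y] [AddCommGroup Z] [Module k Z]
  [AddCommGroup X'] [Module k X'] [AddCommGroup Y'] [Module k Y']

lemma natR (f : X →ₗ[k] X') (t : (X ⊗[k] Y) ⊗[k] Z) :
    LinearMap.rTensor (Y ⊗[k] Z) f (TensorProduct.assoc k X Y Z t) =
      TensorProduct.assoc k X' Y Z (LinearMap.rTensor Z (LinearMap.rTensor Y f) t) := by
  have := map_map_assoc f LinearMap.id LinearMap.id t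
  rw [TensorProduct.map_id] at this
  exact this

lemma natL (g : Y →ₗ[k] Y') (t : (X ⊗[k] Y) ⊗[k] Z) :
    LinearMap.lTensor X (LinearMap.rTensor Z g) (TensorProduct.assoc k X Y Z t) =
      TensorProduct.assoc k X Y' Z (LinearMap.rTensor Z (LinearMap.lTensor X g) t) :=
  map_map_assoc LinearMap.id g LinearMap.id t

end NatHelpers


theorem AYD.sum_swap5 {β : Type*} [AddCommMonoid β] {p0 pM pN : ℕ} {qa qb : Fin p0 → ℕ}
    (F : (i : Fin p0) → Fin (qa i) → Fin pM → Fin (qb i) → Fin pN → β) :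
    ∑ i, ∑ r, ∑ j, ∑ s, ∑ l, F i r j s l = ∑ j, ∑ l, ∑ i, ∑ r, ∑ s, F i r j s l :=
  calc ∑ i, ∑ r, ∑ j, ∑ s, ∑ l, F i r j s l
      = ∑ i, ∑ r, ∑ j, ∑ l, ∑ s, F i r j s l :=
        Finset.sum_congr rfl fun i _ => Finset.sum_congr rfl fun r _ =>
          Finset.sum_congr rfl fun j _ => Finset.sum_comm
    _ = ∑ i, ∑ j, ∑ r, ∑ l, ∑ s, F i r j s l :=
        Finset.sum_congr rfl fun i _ => Finset.sum_comm
    _ = ∑ i, ∑ j, ∑ l, ∑ r, ∑ s, F i r j s l :=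
        Finset.sum_congr rfl fun i _ => Finset.sum_congr rfl fun j _ =>
          Finset.sum_comm
    _ = ∑ j, ∑ i, ∑ l, ∑ r, ∑ s, F i r j s l := Finset.sum_comm
    _ = ∑ j, ∑ l, ∑ i, ∑ r, ∑ s, F i r j s l :=
        Finset.sum_congr rfl fun j _ => Finset.sum_comm

theorem AYD.sum_swap4 {β : Type*} [AddCommMonoid β] {n pM pN : ℕ} {qc : Fin n → ℕ}
    (F : (i : Fin n) → Fin pM → Fin pN → Fin (qc i) → β) :
    ∑ i, ∑ j, ∑ l, ∑ q, F i j l q = ∑ j, ∑ l, ∑ i, ∑ q, F i j l q :=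
  calc ∑ i, ∑ j, ∑ l, ∑ q, F i j l q
      = ∑ j, ∑ i, ∑ l, ∑ q, F i j l q := Finset.sum_comm
    _ = ∑ j, ∑ l, ∑ i, ∑ q, F i j l q :=
        Finset.sum_congr rfl fun j _ => Finset.sum_comm

namespace AYD
variable (k : Type*) {H : Type*} [Field k] [Ring H] [HopfAlgebra k H]

noncomputable abbrev Δ : H →ₗ[k] H ⊗[k] H := Coalgebra.comul (R := k)

noncomputable def D3 : H →ₗ[k] (H ⊗[k] H) ⊗[k] H := LinearMap.rTensor H (Δ k) ∘ₗ Δ k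
noncomputable def D4 : H →ₗ[k] ((H ⊗[k] H) ⊗[k] H) ⊗[k] H := LinearMap.rTensor H (D3 k) ∘ₗ Δ k
noncomputable def D5 : H →ₗ[k] (((H ⊗[k] H) ⊗[k] H) ⊗[k] H) ⊗[k] H :=
  LinearMap.rTensor H (D4 k) ∘ₗ Δ k

noncomputable def D6 : H →ₗ[k] ((((H ⊗[k] H) ⊗[k] H) ⊗[k] H) ⊗[k] H) ⊗[k] H :=
  LinearMap.rTensor H (D5 k) ∘ₗ Δ k

lemma D3_apply (x : H) : D3 k x = LinearMap.rTensor H (Δ k) (Δ k x) := rfl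

lemma D3_eq (h : H) :
    (TensorProduct.map (Coalgebra.comul (R := k)) (LinearMap.id (M := H)))
      (Coalgebra.comul (R := k) h) = D3 k h := rfl
lemma D4_apply (x : H) : D4 k x = LinearMap.rTensor H (D3 k) (Δ k x) := rfl
lemma D5_apply (x : H) : D5 k x = LinearMap.rTensor H (D4 k) (Δ k x) := rfl

lemma D6_apply (x : H) : D6 k x = LinearMap.rTensor H (D5 k) (Δ k x) := rfl

lemma coassoc' (x : H) :
    LinearMap.lTensor H (Δ k) (Δ k x) = TensorProduct.assoc k H H H (D3 k x) :=
  (Coalgebra.coassoc_apply x).symm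

lemma coassoc_comp : LinearMap.lTensor H (Δ k) ∘ₗ Δ k =
    (TensorProduct.assoc k H H H).toLinearMap ∘ₗ D3 k :=
  LinearMap.ext fun x => coassoc' k x

/-- `P1 : (id ⊗ Δ)(Δ₃ x) = A₂ (Δ₄ x)` -/
lemma P1 (x : H) : LinearMap.lTensor (H ⊗[k] H) (Δ k) (D3 k x) =
    TensorProduct.assoc k (H ⊗[k] H) H H (D4 k x) := by
  have h1 : LinearMap.lTensor (H ⊗[k] H) (Δ k) (LinearMap.rTensor H (Δ k) (Δ k x))
      = TensorProduct.map (Δ k) (Δ k) (Δ k x) := by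
    rw [← LinearMap.lTensor_comp_rTensor]; rfl
  have h2 : TensorProduct.map (Δ k) (Δ k) (Δ k x)
      = LinearMap.rTensor (H ⊗[k] H) (Δ k) (LinearMap.lTensor H (Δ k) (Δ k x)) := by
    rw [← LinearMap.rTensor_comp_lTensor]; rfl
  rw [D3_apply, h1, h2, coassoc', natR, D4_apply, D3_apply, ← LinearMap.rTensor_comp_apply]
  rfl


/-- `Q2`, map level: `rT D3 ∘ A₀ = A₀' ∘ rT (rT D3)`. -/
lemma Q2 : LinearMap.rTensor (H ⊗[k] H) (D3 k) ∘ₗ (TensorProduct.assoc k H H H).toLinearMap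
    = (TensorProduct.assoc k ((H ⊗[k] H) ⊗[k] H) H H).toLinearMap ∘ₗ
        LinearMap.rTensor H (LinearMap.rTensor H (D3 k)) :=
  LinearMap.ext fun t => natR (X := H) (Y := H) (Z := H) (X' := (H ⊗[k] H) ⊗[k] H) (D3 k) t

/-- splitting the first leg of `Δ₃` by `Δ₃` gives `Δ₅`. -/
lemma Q3 : LinearMap.rTensor H (LinearMap.rTensor H (D3 k)) ∘ₗ D3 k = D5 k := by
  rw [D3, ← LinearMap.comp_assoc, ← LinearMap.rTensor_comp, D5, D4, D3]

/-- L0 : `(Δ₃ ⊗ Δ₃)(Δ h)` in terms of `Δ₆`. -/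
lemma L0 (h : H) : TensorProduct.map (D3 k) (D3 k) (Δ k h) =
    TensorProduct.assoc k ((H ⊗[k] H) ⊗[k] H) (H ⊗[k] H) H
      (LinearMap.rTensor H
        ((TensorProduct.assoc k ((H ⊗[k] H) ⊗[k] H) H H).toLinearMap) (D6 k h)) := by
  have h1 : TensorProduct.map (D3 k) (D3 k) (Δ k h)
      = LinearMap.rTensor ((H ⊗[k] H) ⊗[k] H) (D3 k)
          (LinearMap.lTensor H (D3 k) (Δ k h)) := by
    rw [← LinearMap.rTensor_comp_lTensor]; rfl
  have h2 : LinearMap.lTensor H (D3 k) (Δ k h)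
      = TensorProduct.assoc k H (H ⊗[k] H) H
          (LinearMap.rTensor H ((TensorProduct.assoc k H H H).toLinearMap) (D4 k h)) := by
    have e1 : LinearMap.lTensor H (D3 k) (Δ k h)
        = LinearMap.lTensor H (LinearMap.rTensor H (Δ k))
            (LinearMap.lTensor H (Δ k) (Δ k h)) := by
      rw [D3, ← LinearMap.lTensor_comp_apply]
    rw [e1, coassoc', natL]
    congr 1
    rw [D3_apply, ← LinearMap.rTensor_comp_apply, coassoc_comp, D4,
      LinearMap.rTensor_comp, LinearMap.comp_apply]
    rfl
  rw [h1, h2, natR]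
  congr 1
  rw [← LinearMap.rTensor_comp_apply, Q2, LinearMap.rTensor_comp, LinearMap.comp_apply]
  congr 1
  rw [D4_apply, ← LinearMap.rTensor_comp_apply, Q3, ← D6_apply]

lemma P1comp : LinearMap.lTensor (H ⊗[k] H) (Δ k) ∘ₗ D3 k =
    (TensorProduct.assoc k (H ⊗[k] H) H H).toLinearMap ∘ₗ D4 k :=
  LinearMap.ext fun x => P1 k x

/-- S1: splitting the last leg of `Δ₄` gives `Δ₅`. -/
lemma S1 (x : H) : LinearMap.lTensor ((H ⊗[k] H) ⊗[k] H) (Δ k) (D4 k x) =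
    TensorProduct.assoc k ((H ⊗[k] H) ⊗[k] H) H H (D5 k x) := by
  have h1 : LinearMap.lTensor ((H ⊗[k] H) ⊗[k] H) (Δ k) (D4 k x)
      = LinearMap.rTensor (H ⊗[k] H) (D3 k) (LinearMap.lTensor H (Δ k) (Δ k x)) := by
    rw [D4_apply]
    have a1 : LinearMap.lTensor ((H ⊗[k] H) ⊗[k] H) (Δ k) ∘ₗ LinearMap.rTensor H (D3 k)
        = LinearMap.rTensor (H ⊗[k] H) (D3 k) ∘ₗ LinearMap.lTensor H (Δ k) := by
      rw [LinearMap.lTensor_comp_rTensor, LinearMap.rTensor_comp_lTensor]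
    exact LinearMap.congr_fun a1 (Δ k x)
  rw [h1, coassoc', natR]
  congr 1
  rw [← LinearMap.comp_apply, Q3]

/-- Q4: splitting the third leg of `Δ₄` gives `Δ₅`, map level. -/
lemma Q4 : LinearMap.rTensor H (LinearMap.lTensor (H ⊗[k] H) (Δ k)) ∘ₗ D4 k =
    LinearMap.rTensor H ((TensorProduct.assoc k (H ⊗[k] H) H H).toLinearMap) ∘ₗ D5 k := by
  rw [D4, D5, ← LinearMap.comp_assoc, ← LinearMap.rTensor_comp, P1comp,
    LinearMap.rTensor_comp, LinearMap.comp_assoc]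

/-- L1 : splitting the two last legs of `Δ₄` gives `Δ₆`. -/
lemma L1 (x : H) : TensorProduct.map (LinearMap.lTensor (H ⊗[k] H) (Δ k)) (Δ k) (D4 k x) =
    TensorProduct.assoc k ((H ⊗[k] H) ⊗[k] (H ⊗[k] H)) H H
      (LinearMap.rTensor H (LinearMap.rTensor H
        ((TensorProduct.assoc k (H ⊗[k] H) H H).toLinearMap)) (D6 k x)) := by
  have h1 : TensorProduct.map (LinearMap.lTensor (H ⊗[k] H) (Δ k)) (Δ k) (D4 k x)
      = LinearMap.rTensor (H ⊗[k] H) (LinearMap.lTensor (H ⊗[k] H) (Δ k))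
          (LinearMap.lTensor ((H ⊗[k] H) ⊗[k] H) (Δ k) (D4 k x)) := by
    rw [← LinearMap.rTensor_comp_lTensor]; rfl
  rw [h1, S1, natR]
  congr 1
  rw [D5_apply, ← LinearMap.rTensor_comp_apply, Q4, LinearMap.rTensor_comp,
    LinearMap.comp_apply, ← D6_apply]

noncomputable def gam : ((H ⊗[k] H) ⊗[k] H) ⊗[k] H →ₗ[k] H ⊗[k] (H ⊗[k] (H ⊗[k] H)) :=
  (TensorProduct.assoc k H H (H ⊗[k] H)).toLinearMap ∘ₗ
    (TensorProduct.assoc k (H ⊗[k] H) H H).toLinearMap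

@[simp] lemma gam_tmul (a b c d : H) :
    gam k (((a ⊗ₜ[k] b) ⊗ₜ[k] c) ⊗ₜ[k] d) = a ⊗ₜ[k] (b ⊗ₜ[k] (c ⊗ₜ[k] d)) := rfl

noncomputable def gam' : (H ⊗[k] (H ⊗[k] H)) ⊗[k] H →ₗ[k] H ⊗[k] (H ⊗[k] (H ⊗[k] H)) :=
  LinearMap.lTensor H (TensorProduct.assoc k H H H).toLinearMap ∘ₗ
    (TensorProduct.assoc k H (H ⊗[k] H) H).toLinearMap

noncomputable def chi : ((H ⊗[k] H) ⊗[k] H) ⊗[k] ((H ⊗[k] H) ⊗[k] H) →ₗ[k]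
    H ⊗[k] (H ⊗[k] ((H ⊗[k] H) ⊗[k] (H ⊗[k] H))) :=
  LinearMap.lTensor H (LinearMap.lTensor H
      (TensorProduct.assoc k H H (H ⊗[k] H)).symm.toLinearMap) ∘ₗ
    LinearMap.lTensor H (TensorProduct.assoc k H H (H ⊗[k] (H ⊗[k] H))).toLinearMap ∘ₗ
    (TensorProduct.assoc k H (H ⊗[k] H) (H ⊗[k] (H ⊗[k] H))).toLinearMap ∘ₗ
    TensorProduct.map (TensorProduct.assoc k H H H).toLinearMap
      (TensorProduct.assoc k H H H).toLinearMap

noncomputable def rho6 : ((H ⊗[k] H) ⊗[k] (H ⊗[k] H)) ⊗[k] (H ⊗[k] H) →ₗ[k]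
    H ⊗[k] (H ⊗[k] ((H ⊗[k] H) ⊗[k] (H ⊗[k] H))) :=
  (TensorProduct.assoc k H H ((H ⊗[k] H) ⊗[k] (H ⊗[k] H))).toLinearMap ∘ₗ
    (TensorProduct.assoc k (H ⊗[k] H) (H ⊗[k] H) (H ⊗[k] H)).toLinearMap

/-- the two routes from `Δ₆`'s shape to the `(1,1,2,2)`-grouped shape agree. -/
lemma structEq :
    chi k (H := H) ∘ₗ (TensorProduct.assoc k ((H ⊗[k] H) ⊗[k] H) (H ⊗[k] H) H).toLinearMap ∘ₗ
        LinearMap.rTensor H (TensorProduct.assoc k ((H ⊗[k] H) ⊗[k] H) H H).toLinearMap =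
      rho6 k ∘ₗ (TensorProduct.assoc k ((H ⊗[k] H) ⊗[k] (H ⊗[k] H)) H H).toLinearMap ∘ₗ
        LinearMap.rTensor H (LinearMap.rTensor H
          (TensorProduct.assoc k (H ⊗[k] H) H H).toLinearMap) := by
  ext
  simp [chi, rho6]

noncomputable def PhiMap : ((H ⊗[k] H) ⊗[k] H) ⊗[k] ((H ⊗[k] H) ⊗[k] H) →ₗ[k]
    H ⊗[k] (H ⊗[k] (H ⊗[k] (H ⊗[k] H))) :=
  LinearMap.lTensor H (LinearMap.lTensor H (LinearMap.rTensor (H ⊗[k] H)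
    (LinearMap.mul' k H ∘ₗ LinearMap.rTensor H (HopfAlgebra.antipode (R := k))))) ∘ₗ chi k

@[simp] lemma PhiMap_tmul (c d e f g t : H) :
    PhiMap k (((c ⊗ₜ[k] d) ⊗ₜ[k] e) ⊗ₜ[k] ((f ⊗ₜ[k] g) ⊗ₜ[k] t)) =
      c ⊗ₜ[k] (d ⊗ₜ[k] ((HopfAlgebra.antipode (R := k) e * f) ⊗ₜ[k] (g ⊗ₜ[k] t))) := by
  simp [PhiMap, chi]

noncomputable def PsiMap : (H ⊗[k] (H ⊗[k] H)) ⊗[k] H →ₗ[k]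
    H ⊗[k] (H ⊗[k] (H ⊗[k] (H ⊗[k] H))) :=
  LinearMap.lTensor H (LinearMap.lTensor H (TensorProduct.mk k H (H ⊗[k] H) 1)) ∘ₗ gam' k

@[simp] lemma PsiMap_tmul (a p q c : H) :
    PsiMap k ((a ⊗ₜ[k] (p ⊗ₜ[k] q)) ⊗ₜ[k] c) =
      a ⊗ₜ[k] (p ⊗ₜ[k] ((1 : H) ⊗ₜ[k] (q ⊗ₜ[k] c))) := by
  simp [PsiMap, gam']

/-- L3: the left composite factors through `gam`. -/
lemma L3 : LinearMap.lTensor H (LinearMap.lTensor H (LinearMap.rTensor (H ⊗[k] H)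
      (LinearMap.mul' k H ∘ₗ LinearMap.rTensor H (HopfAlgebra.antipode (R := k))))) ∘ₗ
      rho6 k ∘ₗ TensorProduct.map (LinearMap.lTensor (H ⊗[k] H) (Δ k)) (Δ k) =
    LinearMap.lTensor H (LinearMap.lTensor H
      (TensorProduct.map (LinearMap.mul' k H ∘ₗ LinearMap.rTensor H
        (HopfAlgebra.antipode (R := k)) ∘ₗ Coalgebra.comul) (Δ k))) ∘ₗ gam k := by
  ext h₁ h₂ h₃ h₄
  simp [rho6]

/-- L6: `gam (Δ₄ x) = (id⊗id⊗Δ) (A₀ (Δ₃ x))`. -/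
lemma L6comp : gam k (H := H) ∘ₗ (TensorProduct.assoc k (H ⊗[k] H) H H).symm.toLinearMap ∘ₗ
      LinearMap.lTensor (H ⊗[k] H) (Δ k) =
    LinearMap.lTensor H (LinearMap.lTensor H (Δ k)) ∘ₗ
      (TensorProduct.assoc k H H H).toLinearMap := by
  ext h₁ h₂ h₃
  simp only [TensorProduct.AlgebraTensorModule.curry_apply, TensorProduct.curry_apply,
    LinearMap.coe_restrictScalars, LinearMap.coe_comp, LinearEquiv.coe_coe,
    Function.comp_apply, LinearMap.lTensor_tmul, TensorProduct.assoc_tmul]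
  generalize (Δ k) h₃ = Y
  induction Y using TensorProduct.induction_on with
  | zero => simp only [TensorProduct.tmul_zero, map_zero]
  | tmul y₁ y₂ => simp [gam]
  | add Y₁ Y₂ i₁ i₂ => simp only [TensorProduct.tmul_add, map_add, i₁, i₂]

lemma L6 (x : H) : gam k (D4 k x) =
    LinearMap.lTensor H (LinearMap.lTensor H (Δ k))
      (TensorProduct.assoc k H H H (D3 k x)) := by
  have h1 : D4 k x = (TensorProduct.assoc k (H ⊗[k] H) H H).symm
      (LinearMap.lTensor (H ⊗[k] H) (Δ k) (D3 k x)) := by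
    rw [P1, LinearEquiv.symm_apply_apply]
  rw [h1]
  exact LinearMap.congr_fun (L6comp k) (D3 k x)

/-- gam' absorbs the associator. -/
lemma Gm : gam' k (H := H) ∘ₗ LinearMap.rTensor H (TensorProduct.assoc k H H H).toLinearMap =
    gam k := by
  ext
  simp [gam, gam']

/-- counit collapse. -/
lemma CU : TensorProduct.map ((Algebra.linearMap k H) ∘ₗ (Coalgebra.counit (R := k))) (Δ k) ∘ₗ
      Δ k = TensorProduct.mk k H (H ⊗[k] H) 1 ∘ₗ Δ k := by
  have h1 : (TensorProduct.map ((Algebra.linearMap k H) ∘ₗ (Coalgebra.counit (R := k))) (Δ k) :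
        H ⊗[k] H →ₗ[k] H ⊗[k] (H ⊗[k] H))
      = (LinearMap.lTensor H (Δ k) : H ⊗[k] H →ₗ[k] H ⊗[k] (H ⊗[k] H)) ∘ₗ
        (LinearMap.rTensor H ((Algebra.linearMap k H) ∘ₗ (Coalgebra.counit (R := k))) :
          H ⊗[k] H →ₗ[k] H ⊗[k] H) := by
    rw [LinearMap.lTensor_comp_rTensor]
  rw [h1, LinearMap.comp_assoc, LinearMap.rTensor_comp, LinearMap.comp_assoc,
    Coalgebra.rTensor_counit_comp_comul]
  have h2 : LinearMap.rTensor H (Algebra.linearMap k H) ∘ₗ TensorProduct.mk k k H 1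
      = TensorProduct.mk k H H 1 := by
    ext x
    simp
  rw [h2]
  have h3 : LinearMap.lTensor H (Δ k) ∘ₗ TensorProduct.mk k H H 1
      = TensorProduct.mk k H (H ⊗[k] H) 1 ∘ₗ Δ k := by
    ext x
    simp
  exact h3

/-- The key Hopf algebra identity. -/
theorem core (h : H) :
    PhiMap k (TensorProduct.map (D3 k) (D3 k) (Δ k h)) =
      PsiMap k ((TensorProduct.map (LinearMap.lTensor H (Δ k)) LinearMap.id) (D3 k h)) := by
  -- right-hand side
  have r1 : (TensorProduct.map (LinearMap.lTensor H (Δ k)) LinearMap.id) (D3 k h)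
      = LinearMap.rTensor H ((TensorProduct.assoc k H H H).toLinearMap)
          (D4 k h) := by
    show LinearMap.rTensor H (LinearMap.lTensor H (Δ k)) (D3 k h) = _
    rw [D3_apply, ← LinearMap.rTensor_comp_apply, coassoc_comp, LinearMap.rTensor_comp,
      LinearMap.comp_apply]
    rfl
  have r2 : PsiMap k ((TensorProduct.map (LinearMap.lTensor H (Δ k)) LinearMap.id) (D3 k h))
      = LinearMap.lTensor H (LinearMap.lTensor H (TensorProduct.mk k H (H ⊗[k] H) 1))
          (gam k (D4 k h)) := by
    rw [r1, PsiMap, LinearMap.comp_apply]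
    congr 1
    exact LinearMap.congr_fun (Gm k) (D4 k h)
  -- left-hand side
  have l1 : PhiMap k (TensorProduct.map (D3 k) (D3 k) (Δ k h))
      = LinearMap.lTensor H (LinearMap.lTensor H (LinearMap.rTensor (H ⊗[k] H)
          (LinearMap.mul' k H ∘ₗ LinearMap.rTensor H (HopfAlgebra.antipode (R := k)))))
          (rho6 k (TensorProduct.map (LinearMap.lTensor (H ⊗[k] H) (Δ k)) (Δ k) (D4 k h))) := by
    rw [L0, L1, PhiMap, LinearMap.comp_apply]
    congr 1
    exact LinearMap.congr_fun (structEq k) (D6 k h)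
  have l2 := LinearMap.congr_fun (L3 k) (D4 k h)
  simp only [LinearMap.comp_apply] at l2
  rw [l1, r2, l2, HopfAlgebra.mul_antipode_rTensor_comul, L6,
    ← LinearMap.lTensor_comp_apply, ← LinearMap.lTensor_comp, CU]
  simp only [LinearMap.lTensor_comp, LinearMap.comp_apply]

end AYD

end Aux

section

variable (k : Type*) {H M N : Type*} [Field k] [Ring H] [HopfAlgebra k H]
  [AddCommGroup M] [Module k M] [AddCommGroup N] [Module k N]

namespace AYD

/-- `G a b c : H ⊗ M → H ⊗ M`, `w ⊗ z ↦ (a*w*S'(c)) ⊗ α(b ⊗ z)`. -/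
noncomputable def G {M : Type*} [AddCommGroup M] [Module k M] (S' : H →ₗ[k] H)
    (α : H ⊗[k] M →ₗ[k] M) (a b c : H) : H ⊗[k] M →ₗ[k] H ⊗[k] M :=
  TensorProduct.map (LinearMap.mulRight k (S' c) ∘ₗ LinearMap.mulLeft k a)
    (α ∘ₗ TensorProduct.mk k H M b)

@[simp] lemma G_tmul {M : Type*} [AddCommGroup M] [Module k M] (S' : H →ₗ[k] H)
    (α : H ⊗[k] M →ₗ[k] M) (a b c w : H) (z : M) :
    G k S' α a b c (w ⊗ₜ[k] z) = (a * w * S' c) ⊗ₜ[k] α (b ⊗ₜ[k] z) := rfl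

/-- A Yetter-Drinfeld type condition, restated via `G`. -/
lemma ydG {M : Type*} [AddCommGroup M] [Module k M] {S' : H →ₗ[k] H}
    {α : H ⊗[k] M →ₗ[k] M} {co : M →ₗ[k] H ⊗[k] M} (hyd : YDCondition k S' α co)
    (a : H) (m : M) {n : ℕ} (h₁ h₂ h₃ : Fin n → H)
    (hrep : D3 k a = ∑ i, (h₁ i ⊗ₜ[k] h₂ i) ⊗ₜ[k] h₃ i) :
    co (α (a ⊗ₜ[k] m)) = ∑ i, G k S' α (h₁ i) (h₂ i) (h₃ i) (co m) := by
  obtain ⟨p, w, z, hw⟩ := AYD.exfin (co m)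
  rw [hyd a m n p h₁ h₂ h₃ w z ((D3_eq k a).trans hrep) hw, hw]
  simp [map_sum]

/-- The big assembled map `Λ`. -/
noncomputable def Lam (Sinv : H →ₗ[k] H) (αM : H ⊗[k] M →ₗ[k] M) (αN : H ⊗[k] N →ₗ[k] N)
    (w u : H) (z : M) (v : N) :
    H ⊗[k] (H ⊗[k] (H ⊗[k] (H ⊗[k] H))) →ₗ[k] H ⊗[k] (M ⊗[k] N) :=
  (LinearMap.rTensor (M ⊗[k] N) (LinearMap.mul' k H) ∘ₗ
      (TensorProduct.assoc k H H (M ⊗[k] N)).symm.toLinearMap) ∘ₗ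
    LinearMap.lTensor H (TensorProduct.leftComm k M H N).toLinearMap ∘ₗ
    LinearMap.lTensor H (LinearMap.lTensor M (LinearMap.rTensor N (LinearMap.mul' k H) ∘ₗ
      (TensorProduct.assoc k H H N).symm.toLinearMap)) ∘ₗ
    LinearMap.lTensor H (LinearMap.lTensor M (LinearMap.lTensor H
      (TensorProduct.comm k N H).toLinearMap)) ∘ₗ
    TensorProduct.map LinearMap.id
      (TensorProduct.map (αM ∘ₗ (TensorProduct.mk k H M).flip z)
        (TensorProduct.map (LinearMap.mulLeft k w)
          (TensorProduct.map (αN ∘ₗ (TensorProduct.mk k H N).flip v)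
            (LinearMap.mulLeft k u ∘ₗ Sinv))))

@[simp] lemma Lam_tmul (Sinv : H →ₗ[k] H) (αM : H ⊗[k] M →ₗ[k] M) (αN : H ⊗[k] N →ₗ[k] N)
    (w u : H) (z : M) (v : N) (p₁ p₂ p₃ p₄ p₅ : H) :
    Lam k Sinv αM αN w u z v (p₁ ⊗ₜ[k] (p₂ ⊗ₜ[k] (p₃ ⊗ₜ[k] (p₄ ⊗ₜ[k] p₅)))) =
      (p₁ * ((w * p₃) * (u * Sinv p₅))) ⊗ₜ[k]
        (αM (p₂ ⊗ₜ[k] z) ⊗ₜ[k] αN (p₄ ⊗ₜ[k] v)) := by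
  simp [Lam]

end AYD

/-- if `M` is a left-left Yetter-Drinfeld `H`-module and `N` a left-left
anti-Yetter-Drinfeld `H`-module (`H` with invertible antipode), then `M ⊗ N`, with the
diagonal action and codiagonal coaction, is an anti-Yetter-Drinfeld module. -/
theorem yd_tensor_ayd_is_ayd (Sinv : H →ₗ[k] H)
    (hSinv₁ : ∀ h : H, Sinv (HopfAlgebra.antipode (R := k) h) = h)
    (hSinv₂ : ∀ h : H, HopfAlgebra.antipode (R := k) (Sinv h) = h)
    (αM : H ⊗[k] M →ₗ[k] M) (αN : H ⊗[k] N →ₗ[k] N)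
    (coM : M →ₗ[k] H ⊗[k] M) (coN : N →ₗ[k] H ⊗[k] N)
    -- `M` and `N` are left `H`-modules:
    (hαM1 : ∀ m : M, αM ((1 : H) ⊗ₜ[k] m) = m)
    (hαMmul : ∀ (h g : H) (m : M), αM ((h * g) ⊗ₜ[k] m) = αM (h ⊗ₜ[k] αM (g ⊗ₜ[k] m)))
    (hαN1 : ∀ n : N, αN ((1 : H) ⊗ₜ[k] n) = n)
    (hαNmul : ∀ (h g : H) (n : N), αN ((h * g) ⊗ₜ[k] n) = αN (h ⊗ₜ[k] αN (g ⊗ₜ[k] n)))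
    -- `M` and `N` are left `H`-comodules:
    (hcoM_counit : ∀ m : M, (TensorProduct.lid k M)
      ((TensorProduct.map (Coalgebra.counit (R := k)) LinearMap.id) (coM m)) = m)
    (hcoM_coassoc : ∀ m : M,
      (TensorProduct.map (Coalgebra.comul (R := k)) LinearMap.id) (coM m) =
        (TensorProduct.assoc k H H M).symm ((TensorProduct.map LinearMap.id coM) (coM m)))
    (hcoN_counit : ∀ n : N, (TensorProduct.lid k N)
      ((TensorProduct.map (Coalgebra.counit (R := k)) LinearMap.id) (coN n)) = n)
    (hcoN_coassoc : ∀ n : N,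
      (TensorProduct.map (Coalgebra.comul (R := k)) LinearMap.id) (coN n) =
        (TensorProduct.assoc k H H N).symm ((TensorProduct.map LinearMap.id coN) (coN n)))
    -- `M` is Yetter-Drinfeld, `N` is anti-Yetter-Drinfeld:
    (hM_YD : YDCondition k (HopfAlgebra.antipode (R := k)) αM coM)
    (hN_AYD : YDCondition k Sinv αN coN) :
    YDCondition k Sinv (diagonalAction k αM αN) (codiagonalCoaction k coM coN) := by
  classical
  intro h x n p h₁ h₂ h₃ w z hrep hco
  -- rewrite the right-hand side via `G`
  have hRHS : ∑ i, ∑ j, (h₁ i * w j * Sinv (h₃ i)) ⊗ₜ[k] diagonalAction k αM αN (h₂ i ⊗ₜ[k] z j)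
      = ∑ i, AYD.G k Sinv (diagonalAction k αM αN) (h₁ i) (h₂ i) (h₃ i)
          (codiagonalCoaction k coM coN x) := by
    rw [hco]
    simp [map_sum]
  rw [hRHS]
  have hrep' : AYD.D3 k h = ∑ i, (h₁ i ⊗ₜ[k] h₂ i) ⊗ₜ[k] h₃ i := (AYD.D3_eq k h).symm.trans hrep
  clear hco hrep hRHS
  -- main statement, by linearity it suffices to consider pure tensors
  induction x using TensorProduct.induction_on with
  | zero => simp
  | add t₁ t₂ e₁ e₂ => simp only [tmul_add, map_add, e₁, e₂, Finset.sum_add_distrib]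
  | tmul m n' =>
    -- choose representations
    obtain ⟨p0, a, b, hab⟩ := AYD.exfin (AYD.Δ k h)
    choose qa c d e hcde using fun i : Fin p0 => AYD.repr3 (AYD.D3 k (a i))
    choose qb f g t hfgt using fun i : Fin p0 => AYD.repr3 (AYD.D3 k (b i))
    obtain ⟨pM, w, z, hwz⟩ := AYD.exfin (coM m)
    obtain ⟨pN, u, v, huv⟩ := AYD.exfin (coN n')
    choose qc P Q hPQ using fun i : Fin n => AYD.exfin (AYD.Δ k (h₂ i))
    -- the diagonal action on pure tensors
    have hdiag : ∀ (x : H) (nx : ℕ) (ax bx : Fin nx → H),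
        AYD.Δ k x = ∑ i, ax i ⊗ₜ[k] bx i → ∀ (mm : M) (nn : N),
        diagonalAction k αM αN (x ⊗ₜ[k] (mm ⊗ₜ[k] nn)) =
          ∑ i, αM (ax i ⊗ₜ[k] mm) ⊗ₜ[k] αN (bx i ⊗ₜ[k] nn) := by
      intro x nx ax bx hx mm nn
      have : (TensorProduct.map (Coalgebra.comul (R := k)) LinearMap.id)
          (x ⊗ₜ[k] (mm ⊗ₜ[k] nn)) = (∑ i, ax i ⊗ₜ[k] bx i) ⊗ₜ[k] (mm ⊗ₜ[k] nn) := by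
        rw [← hx]; rfl
      rw [diagonalAction, LinearMap.comp_apply, LinearMap.comp_apply, this,
        TensorProduct.sum_tmul, map_sum, map_sum]
      exact Finset.sum_congr rfl fun i _ => by
        simp
    -- the codiagonal coaction on `m ⊗ n'`
    have hcodiag : codiagonalCoaction k coM coN (m ⊗ₜ[k] n') =
        ∑ j, ∑ l, (w j * u l) ⊗ₜ[k] (z j ⊗ₜ[k] v l) := by
      rw [codiagonalCoaction, LinearMap.comp_apply, LinearMap.comp_apply]
      have : (TensorProduct.map coM coN) (m ⊗ₜ[k] n')
          = (∑ j, w j ⊗ₜ[k] z j) ⊗ₜ[k] (∑ l, u l ⊗ₜ[k] v l) := by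
        rw [← hwz, ← huv]; rfl
      rw [this, TensorProduct.sum_tmul, map_sum, map_sum]
      refine Finset.sum_congr rfl fun j _ => ?_
      rw [TensorProduct.tmul_sum, map_sum, map_sum]
      exact Finset.sum_congr rfl fun l _ => by simp
    -- per-`i` expansion of the left-hand side
    have key_i : ∀ i, codiagonalCoaction k coM coN
        (αM (a i ⊗ₜ[k] m) ⊗ₜ[k] αN (b i ⊗ₜ[k] n')) =
        ∑ r, ∑ j, ∑ s, ∑ l,
          (c i r * ((w j * (HopfAlgebra.antipode (R := k) (e i r) * f i s)) *
              (u l * Sinv (t i s)))) ⊗ₜ[k]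
            (αM (d i r ⊗ₜ[k] z j) ⊗ₜ[k] αN (g i s ⊗ₜ[k] v l)) := by
      intro i
      have hM := AYD.ydG k hM_YD (a i) m (c i) (d i) (e i) (hcde i)
      have hN := AYD.ydG k hN_AYD (b i) n' (f i) (g i) (t i) (hfgt i)
      rw [hwz] at hM
      rw [huv] at hN
      simp only [map_sum, AYD.G_tmul] at hM hN
      rw [codiagonalCoaction, LinearMap.comp_apply, LinearMap.comp_apply]
      have : (TensorProduct.map coM coN) (αM (a i ⊗ₜ[k] m) ⊗ₜ[k] αN (b i ⊗ₜ[k] n'))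
          = coM (αM (a i ⊗ₜ[k] m)) ⊗ₜ[k] coN (αN (b i ⊗ₜ[k] n')) := rfl
      rw [this, hM, hN, TensorProduct.sum_tmul, map_sum, map_sum]
      refine Finset.sum_congr rfl fun r _ => ?_
      rw [TensorProduct.sum_tmul, map_sum, map_sum]
      refine Finset.sum_congr rfl fun j _ => ?_
      rw [TensorProduct.tmul_sum, map_sum, map_sum]
      refine Finset.sum_congr rfl fun s _ => ?_
      rw [TensorProduct.tmul_sum, map_sum, map_sum]
      refine Finset.sum_congr rfl fun l _ => ?_
      simp [mul_assoc]
    -- the assembled left-hand side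
    have hLHS : codiagonalCoaction k coM coN
        (diagonalAction k αM αN (h ⊗ₜ[k] (m ⊗ₜ[k] n'))) =
        ∑ i, ∑ r, ∑ j, ∑ s, ∑ l,
          (c i r * ((w j * (HopfAlgebra.antipode (R := k) (e i r) * f i s)) *
              (u l * Sinv (t i s)))) ⊗ₜ[k]
            (αM (d i r ⊗ₜ[k] z j) ⊗ₜ[k] αN (g i s ⊗ₜ[k] v l)) := by
      rw [hdiag h p0 a b hab m n', map_sum]
      exact Finset.sum_congr rfl fun i _ => key_i i
    -- per-`i` expansion of the right-hand side
    have hRHS2 : ∀ i, AYD.G k Sinv (diagonalAction k αM αN) (h₁ i) (h₂ i) (h₃ i)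
        (codiagonalCoaction k coM coN (m ⊗ₜ[k] n')) =
        ∑ j, ∑ l, ∑ q,
          (h₁ i * ((w j * 1) * (u l * Sinv (h₃ i)))) ⊗ₜ[k]
            (αM (P i q ⊗ₜ[k] z j) ⊗ₜ[k] αN (Q i q ⊗ₜ[k] v l)) := by
      intro i
      rw [hcodiag]
      simp only [map_sum, AYD.G_tmul]
      refine Finset.sum_congr rfl fun j _ => Finset.sum_congr rfl fun l _ => ?_
      rw [hdiag (h₂ i) (qc i) (P i) (Q i) (hPQ i) (z j) (v l), TensorProduct.tmul_sum]
      refine Finset.sum_congr rfl fun q _ => ?_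
      simp [mul_assoc]
    -- the two sides of the key identity
    have hEL : AYD.PhiMap k (TensorProduct.map (AYD.D3 k) (AYD.D3 k) (AYD.Δ k h)) =
        ∑ i, ∑ r, ∑ s, c i r ⊗ₜ[k] (d i r ⊗ₜ[k]
          ((HopfAlgebra.antipode (R := k) (e i r) * f i s) ⊗ₜ[k] (g i s ⊗ₜ[k] t i s))) := by
      rw [hab, map_sum, map_sum]
      refine Finset.sum_congr rfl fun i _ => ?_
      rw [TensorProduct.map_tmul, hcde, hfgt, TensorProduct.sum_tmul, map_sum]
      refine Finset.sum_congr rfl fun r _ => ?_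
      rw [TensorProduct.tmul_sum, map_sum]
      exact Finset.sum_congr rfl fun s _ => AYD.PhiMap_tmul k _ _ _ _ _ _
    have hER : AYD.PsiMap k ((TensorProduct.map (LinearMap.lTensor H (AYD.Δ k))
          LinearMap.id) (AYD.D3 k h)) =
        ∑ i, ∑ q, h₁ i ⊗ₜ[k] (P i q ⊗ₜ[k] ((1 : H) ⊗ₜ[k] (Q i q ⊗ₜ[k] h₃ i))) := by
      rw [hrep', map_sum, map_sum]
      refine Finset.sum_congr rfl fun i _ => ?_
      rw [TensorProduct.map_tmul, LinearMap.lTensor_tmul, hPQ, TensorProduct.tmul_sum,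
        TensorProduct.sum_tmul, map_sum]
      simp only [LinearMap.id_coe, id_eq]
      exact Finset.sum_congr rfl fun q _ => AYD.PsiMap_tmul k _ _ _ _
    have hcore : (∑ i, ∑ r, ∑ s, c i r ⊗ₜ[k] (d i r ⊗ₜ[k]
          ((HopfAlgebra.antipode (R := k) (e i r) * f i s) ⊗ₜ[k] (g i s ⊗ₜ[k] t i s)))) =
        ∑ i, ∑ q, h₁ i ⊗ₜ[k] (P i q ⊗ₜ[k] ((1 : H) ⊗ₜ[k] (Q i q ⊗ₜ[k] h₃ i))) := by
      rw [← hEL, ← hER]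
      exact AYD.core k h
    -- apply `Λ` to the key identity
    have happly : ∀ (j : Fin pM) (l : Fin pN),
        (∑ i, ∑ r, ∑ s,
          (c i r * ((w j * (HopfAlgebra.antipode (R := k) (e i r) * f i s)) *
              (u l * Sinv (t i s)))) ⊗ₜ[k]
            (αM (d i r ⊗ₜ[k] z j) ⊗ₜ[k] αN (g i s ⊗ₜ[k] v l))) =
        ∑ i, ∑ q,
          (h₁ i * ((w j * 1) * (u l * Sinv (h₃ i)))) ⊗ₜ[k]
            (αM (P i q ⊗ₜ[k] z j) ⊗ₜ[k] αN (Q i q ⊗ₜ[k] v l)) := by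
      intro j l
      have := congrArg (AYD.Lam k Sinv αM αN (w j) (u l) (z j) (v l)) hcore
      simpa only [map_sum, AYD.Lam_tmul] using this
    -- reorder sums and conclude
    rw [hLHS, AYD.sum_swap5 (fun i r j s l =>
      (c i r * ((w j * (HopfAlgebra.antipode (R := k) (e i r) * f i s)) *
          (u l * Sinv (t i s)))) ⊗ₜ[k]
        (αM (d i r ⊗ₜ[k] z j) ⊗ₜ[k] αN (g i s ⊗ₜ[k] v l)))]
    calc (∑ j, ∑ l, ∑ i, ∑ r, ∑ s,
          (c i r * ((w j * (HopfAlgebra.antipode (R := k) (e i r) * f i s)) *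
              (u l * Sinv (t i s)))) ⊗ₜ[k]
            (αM (d i r ⊗ₜ[k] z j) ⊗ₜ[k] αN (g i s ⊗ₜ[k] v l)))
        = ∑ j, ∑ l, ∑ i, ∑ q,
            (h₁ i * ((w j * 1) * (u l * Sinv (h₃ i)))) ⊗ₜ[k]
              (αM (P i q ⊗ₜ[k] z j) ⊗ₜ[k] αN (Q i q ⊗ₜ[k] v l)) :=
          Finset.sum_congr rfl fun j _ => Finset.sum_congr rfl fun l _ => happly j l
      _ = ∑ i, ∑ j, ∑ l, ∑ q,
            (h₁ i * ((w j * 1) * (u l * Sinv (h₃ i)))) ⊗ₜ[k]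
              (αM (P i q ⊗ₜ[k] z j) ⊗ₜ[k] αN (Q i q ⊗ₜ[k] v l)) :=
          (AYD.sum_swap4 (fun i j l q =>
            (h₁ i * ((w j * 1) * (u l * Sinv (h₃ i)))) ⊗ₜ[k]
              (αM (P i q ⊗ₜ[k] z j) ⊗ₜ[k] αN (Q i q ⊗ₜ[k] v l)))).symm
      _ = ∑ i, AYD.G k Sinv (diagonalAction k αM αN) (h₁ i) (h₂ i) (h₃ i)
            (codiagonalCoaction k coM coN (m ⊗ₜ[k] n')) :=
          Finset.sum_congr rfl fun i _ => (hRHS2 i).symm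

end
end

section
/- Let G be a monoid with a binary operation and unit. The diagram expressing associativity, i.e. the commutative square formed by the maps (m × id), (id × m): G × G × G → G × G and m: G × G → G, is a Cartesian (pullback) square if and only if G is a group. -/
/-- for a monoid `G` with multiplication `m`, the associativity square
(with top maps `(m × id), (id × m) : G × G × G → G × G` and bottom maps `m` on both
edges) is Cartesian — i.e. for all `(a,b), (c,d) ∈ G × G` with `ab = cd` there is a
unique triple `(x,y,z) ∈ G³` with `(xy, z) = (a,b)` and `(x, yz) = (c,d)` — if and
only if `G` is a group (every element is invertible). -/
theorem associativity_square_cartesian_iff_group {G : Type*} [Monoid G] :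
    (∀ a b c d : G, a * b = c * d →
      ∃! t : G × G × G,
        t.1 * t.2.1 = a ∧ t.2.2 = b ∧ t.1 = c ∧ t.2.1 * t.2.2 = d) ↔
    (∀ g : G, IsUnit g) := by
  constructor
  · intro h g
    obtain ⟨⟨x, y, z⟩, ⟨h1, h2, h3, h4⟩, -⟩ := h 1 g g 1 (by rw [one_mul, mul_one])
    simp only at h1 h2 h3 h4
    rw [h3] at h1
    rw [h2] at h4
    exact ⟨⟨g, y, h1, h4⟩, rfl⟩
  · intro h a b c d hab
    obtain ⟨u, hu⟩ := h c
    refine ⟨(c, ↑u⁻¹ * a, b), ⟨?_, rfl, rfl, ?_⟩, ?_⟩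
    · rw [← mul_assoc, ← hu, u.mul_inv, one_mul]
    · rw [mul_assoc, hab, ← mul_assoc, ← hu, u.inv_mul, one_mul]
    · rintro ⟨x, y, z⟩ ⟨h1, h2, h3, h4⟩
      simp only at *
      subst h2 h3
      have : (↑u⁻¹ : G) * (x * y) = ↑u⁻¹ * a := by rw [h1]
      rw [← mul_assoc, ← hu, u.inv_mul, one_mul] at this
      rw [this]
end

section
/- Let G be a finite abelian group with bicharacter χ and twist θ(g) = χ(g,g), and let ω(x,y) = χ(x,y)χ(y,x) be non-degenerate. Every twist of (Vec_G, χ) is of the form θ_x(g) = θ(g)ω(x,g) for a unique x ∈ G. -/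
open Multiplicative

lemma aux_cyclic (k : Type*) [Field k] (n : ℕ) [NeZero n] :
    Finite (Multiplicative (ZMod n) →* kˣ) ∧
      Nat.card (Multiplicative (ZMod n) →* kˣ) ≤ n := by
  have hpow : ∀ (φ : Multiplicative (ZMod n) →* kˣ) (a : ZMod n),
      φ (ofAdd a) = φ (ofAdd (1 : ZMod n)) ^ a.val := by
    intro φ a
    rw [← map_pow]
    congr 1
    rw [← ofAdd_nsmul]
    congr 1
    rw [nsmul_eq_mul, mul_one, ZMod.natCast_val, ZMod.cast_id]
  have hroot : ∀ (φ : Multiplicative (ZMod n) →* kˣ),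
      φ (ofAdd (1 : ZMod n)) ∈ rootsOfUnity n k := by
    intro φ
    rw [mem_rootsOfUnity, ← map_pow, ← ofAdd_nsmul, nsmul_eq_mul, mul_one,
      ZMod.natCast_self, ofAdd_zero, map_one]
  set f : (Multiplicative (ZMod n) →* kˣ) → rootsOfUnity n k :=
    fun φ => ⟨φ (ofAdd (1 : ZMod n)), hroot φ⟩ with hf
  have hinj : Function.Injective f := by
    intro φ ψ h
    have h1 : φ (ofAdd (1 : ZMod n)) = ψ (ofAdd (1 : ZMod n)) := congrArg Subtype.val h
    refine MonoidHom.ext fun a => ?_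
    have e1 := hpow φ (toAdd a)
    have e2 := hpow ψ (toAdd a)
    rw [ofAdd_toAdd] at e1 e2
    rw [e1, e2, h1]
  have : Finite (Multiplicative (ZMod n) →* kˣ) := Finite.of_injective f hinj
  refine ⟨this, ?_⟩
  calc Nat.card (Multiplicative (ZMod n) →* kˣ) ≤ Nat.card (rootsOfUnity n k) :=
        Nat.card_le_card_of_injective f hinj
    _ ≤ n := by exact card_rootsOfUnity k n

lemma aux_card (k G : Type*) [Field k] [CommGroup G] [Finite G] :
    Finite (G →* kˣ) ∧ Nat.card (G →* kˣ) ≤ Nat.card G := by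
  classical
  obtain ⟨ι, _, n, hn, ⟨e⟩⟩ := CommGroup.equiv_prod_multiplicative_zmod_of_finite G
  have := Fintype.ofFinite ι
  have hnz : ∀ i, NeZero (n i) := fun i => ⟨by have := hn i; omega⟩
  let E : (G →* kˣ) ≃ ∀ i, (Multiplicative (ZMod (n i)) →* kˣ) :=
    (MulEquiv.monoidHomCongrLeft (N := kˣ) e).toEquiv.trans
      (Pi.monoidHomMulEquiv (fun i => Multiplicative (ZMod (n i))) kˣ).toEquiv
  have hfin : ∀ i, Finite (Multiplicative (ZMod (n i)) →* kˣ) := fun i => (aux_cyclic k (n i)).1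
  have : Finite (∀ i, (Multiplicative (ZMod (n i)) →* kˣ)) := Pi.finite
  have hfinG : Finite (G →* kˣ) := Finite.of_equiv _ E.symm
  refine ⟨hfinG, ?_⟩
  have h1 : Nat.card (G →* kˣ) = ∏ i, Nat.card (Multiplicative (ZMod (n i)) →* kˣ) := by
    rw [Nat.card_congr E, Nat.card_pi]
  have h2 : Nat.card G = ∏ i, n i := by
    rw [Nat.card_congr e.toEquiv, Nat.card_pi]
    congr 1; ext i
    simp [Nat.card_eq_fintype_card]
  rw [h1, h2]
  exact Finset.prod_le_prod' fun i _ => (aux_cyclic k (n i)).2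

/-- let `G` be a finite abelian group, `χ` a bicharacter with
`ω(x,y) = χ(x,y)χ(y,x)` non-degenerate, and `θ(g) = χ(g,g)`.  Every twist of
`(Vec_G, χ)` — i.e. every `t : G → kˣ` with `t(xy) = ω(x,y) t(x) t(y)` — is of the
form `θ_x(g) = θ(g) ω(x,g)` for a unique `x ∈ G`. -/
theorem twists_form_torsor {k G : Type*} [Field k] [CommGroup G] [Fintype G]
    (χ : G → G → kˣ)
    (hχ_left : ∀ x y z : G, χ (x * y) z = χ x z * χ y z)
    (hχ_right : ∀ x y z : G, χ x (y * z) = χ x y * χ x z)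
    (hnondeg : ∀ x : G, (∀ y : G, χ x y * χ y x = 1) → x = 1) :
    ∀ t : G → kˣ, (∀ x y : G, t (x * y) = (χ x y * χ y x) * t x * t y) →
      ∃! x : G, ∀ g : G, t g = χ g g * (χ x g * χ g x) := by
  intro t ht
  -- basic bicharacter facts
  have χone_left : ∀ y, χ 1 y = 1 := by
    intro y
    have := hχ_left 1 1 y
    rw [one_mul] at this
    exact (mul_eq_right.mp this.symm)
  have χone_right : ∀ y, χ y 1 = 1 := by
    intro y
    have := hχ_right y 1 1
    rw [one_mul] at this
    exact (mul_eq_right.mp this.symm)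
  have χinv_left : ∀ x y, χ x⁻¹ y = (χ x y)⁻¹ := by
    intro x y
    have := hχ_left x x⁻¹ y
    rw [mul_inv_cancel, χone_left] at this
    exact eq_inv_of_mul_eq_one_right this.symm
  have χinv_right : ∀ x y, χ x y⁻¹ = (χ x y)⁻¹ := by
    intro x y
    have := hχ_right x y y⁻¹
    rw [mul_inv_cancel, χone_right] at this
    exact eq_inv_of_mul_eq_one_right this.symm
  -- the map x ↦ ω(x, ·) as a monoid hom
  let Φ : G → (G →* kˣ) := fun x =>
    { toFun := fun g => χ x g * χ g x
      map_one' := by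
        show χ x 1 * χ 1 x = 1
        rw [χone_left, χone_right, one_mul]
      map_mul' := by
        intro g h
        show χ x (g * h) * χ (g * h) x = (χ x g * χ g x) * (χ x h * χ h x)
        rw [hχ_right, hχ_left, mul_mul_mul_comm] }
  have hΦapp : ∀ x g, Φ x g = χ x g * χ g x := fun _ _ => rfl
  have hΦinj : Function.Injective Φ := by
    intro a b hab
    have key : ∀ g, χ a g * χ g a = χ b g * χ g b := fun g => DFunLike.congr_fun hab g
    have hab1 : a * b⁻¹ = 1 := by
      apply hnondeg
      intro y
      rw [hχ_left, hχ_right, χinv_left, χinv_right]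
      have : χ a y * (χ b y)⁻¹ * (χ y a * (χ y b)⁻¹)
          = (χ a y * χ y a) * ((χ b y) * (χ y b))⁻¹ := by
        rw [mul_inv]; ac_rfl
      rw [this, key y, mul_inv_cancel]
    exact mul_inv_eq_one.mp hab1
  -- t / θ is a character
  have t_one : t 1 = 1 := by
    have := ht 1 1
    rw [one_mul, χone_left, one_mul, one_mul] at this
    exact (mul_eq_right.mp this.symm)
  let s : G →* kˣ :=
    { toFun := fun g => t g * (χ g g)⁻¹
      map_one' := by
        show t 1 * (χ 1 1)⁻¹ = 1
        rw [t_one, χone_left, inv_one, one_mul]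
      map_mul' := by
        intro x y
        show t (x * y) * (χ (x * y) (x * y))⁻¹ = (t x * (χ x x)⁻¹) * (t y * (χ y y)⁻¹)
        have h1 : χ (x * y) (x * y) = χ x x * χ x y * χ y x * χ y y := by
          rw [hχ_left, hχ_right, hχ_right]; ac_rfl
        rw [ht x y, h1]
        simp only [mul_inv]
        have hc : χ x y * (χ x y)⁻¹ = 1 := mul_inv_cancel _
        have hc' : χ y x * (χ y x)⁻¹ = 1 := mul_inv_cancel _
        calc χ x y * χ y x * t x * t y * ((χ x x)⁻¹ * (χ x y)⁻¹ * (χ y x)⁻¹ * (χ y y)⁻¹)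
            = (χ x y * (χ x y)⁻¹) * (χ y x * (χ y x)⁻¹) *
              (t x * (χ x x)⁻¹ * (t y * (χ y y)⁻¹)) := by ac_rfl
          _ = t x * (χ x x)⁻¹ * (t y * (χ y y)⁻¹) := by rw [hc, hc', one_mul, one_mul] }
  -- Φ is bijective by cardinality
  obtain ⟨hfin, hcard⟩ := aux_card k G
  have hbij : Function.Bijective Φ :=
    (Nat.bijective_iff_injective_and_card Φ).mpr
      ⟨hΦinj, le_antisymm (Nat.card_le_card_of_injective Φ hΦinj) hcard⟩
  obtain ⟨x, hx⟩ := hbij.2 s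
  have hxg : ∀ g, t g = χ g g * (χ x g * χ g x) := by
    intro g
    have : χ x g * χ g x = t g * (χ g g)⁻¹ := DFunLike.congr_fun hx g
    rw [this, mul_comm (t g), ← mul_assoc, mul_inv_cancel, one_mul]
  refine ⟨x, hxg, ?_⟩
  intro y hy
  apply hΦinj
  apply MonoidHom.ext
  intro g
  rw [hΦapp, hΦapp]
  have h1 := hy g
  have h2 := hxg g
  exact mul_left_cancel (h1.symm.trans h2)
end
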